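/- For every real x with |x| < 1, (∑_{n=0}^∞ ((1/24)_n (5/24)_n)/((3/4)_n n!) x^n)² = ∑_{n=0}^∞ ((1/12)_n (1/4)_n (5/12)_n)/((1/2)_n (3/4)_n n!) x^n; that is, ₂F₁(1/24, 5/24; 3/4; x)² = ₃F₂(1/12, 1/4, 5/12; 1/2, 3/4; x). -/
import Mathlib


open scoped BigOperators
open Real

/-- The ascending Pochhammer factorial `(a)_n = a (a+1) ⋯ (a+n-1)`. -/
noncomputable def poch (a : ℝ) (n : ℕ) : ℝ := ∏ i ∈ Finset.range n, (a + i)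

lemma poch_zero (a : ℝ) : poch a 0 = 1 := by simp [poch]

lemma poch_succ (a : ℝ) (n : ℕ) : poch a (n + 1) = poch a n * (a + n) := by
  simp [poch, Finset.prod_range_succ]

lemma poch_pos {a : ℝ} (ha : 0 < a) (n : ℕ) : 0 < poch a n := by
  apply Finset.prod_pos
  intro i _
  positivity

/-- coefficient of ₂F₁(1/24,5/24;3/4;·) -/
noncomputable def cf (n : ℕ) : ℝ :=
  poch (1/24) n * poch (5/24) n / (poch (3/4) n * (n.factorial : ℝ))

/-- coefficient of ₃F₂ -/
noncomputable def df (n : ℕ) : ℝ :=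
  poch (1/12) n * poch (1/4) n * poch (5/12) n /
    (poch (1/2) n * poch (3/4) n * (n.factorial : ℝ))

lemma cf_pos (n : ℕ) : 0 < cf n := by
  unfold cf
  have h1 := poch_pos (show (0:ℝ) < 1/24 by norm_num) n
  have h2 := poch_pos (show (0:ℝ) < 5/24 by norm_num) n
  have h3 := poch_pos (show (0:ℝ) < 3/4 by norm_num) n
  have h4 : (0:ℝ) < n.factorial := by positivity
  positivity

lemma df_pos (n : ℕ) : 0 < df n := by
  unfold df
  have h1 := poch_pos (show (0:ℝ) < 1/12 by norm_num) n
  have h2 := poch_pos (show (0:ℝ) < 1/4 by norm_num) n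
  have h3 := poch_pos (show (0:ℝ) < 5/12 by norm_num) n
  have h4 := poch_pos (show (0:ℝ) < 1/2 by norm_num) n
  have h5 := poch_pos (show (0:ℝ) < 3/4 by norm_num) n
  have h6 : (0:ℝ) < n.factorial := by positivity
  positivity

lemma cf_zero : cf 0 = 1 := by simp [cf, poch_zero]

lemma df_zero : df 0 = 1 := by simp [df, poch_zero]

lemma cf_succ (n : ℕ) :
    cf (n + 1) * ((3/4 + n) * (n + 1)) = (1/24 + n) * (5/24 + n) * cf n := by
  unfold cf
  rw [poch_succ, poch_succ, poch_succ, Nat.factorial_succ]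
  have h3 := (poch_pos (show (0:ℝ) < 3/4 by norm_num) n).ne'
  have h4 : ((n.factorial : ℝ)) ≠ 0 := by positivity
  have h5 : ((3:ℝ)/4 + n) ≠ 0 := by positivity
  have h6 : ((n:ℝ) + 1) ≠ 0 := by positivity
  push_cast
  field_simp

lemma df_succ (n : ℕ) :
    df (n + 1) * ((1/2 + n) * (3/4 + n) * (n + 1)) =
      (1/12 + n) * (1/4 + n) * (5/12 + n) * df n := by
  unfold df
  rw [poch_succ, poch_succ, poch_succ, poch_succ, poch_succ, Nat.factorial_succ]
  have h3 := (poch_pos (show (0:ℝ) < 3/4 by norm_num) n).ne'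
  have h2 := (poch_pos (show (0:ℝ) < 1/2 by norm_num) n).ne'
  have h4 : ((n.factorial : ℝ)) ≠ 0 := by positivity
  have h5 : ((3:ℝ)/4 + n) ≠ 0 := by positivity
  have h7 : ((1:ℝ)/2 + n) ≠ 0 := by positivity
  have h6 : ((n:ℝ) + 1) ≠ 0 := by positivity
  push_cast
  field_simp

lemma cf_le_one (n : ℕ) : cf n ≤ 1 := by
  induction n with
  | zero => rw [cf_zero]
  | succ n ih =>
    have h5 : (0:ℝ) < (3/4 + n) * (n + 1) := by positivity
    have hrec := cf_succ n
    have hle : (1/24 + (n:ℝ)) * (5/24 + n) ≤ (3/4 + n) * (n + 1) := by nlinarith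
    have : cf (n + 1) * ((3/4 + (n:ℝ)) * (n + 1)) ≤ 1 * ((3/4 + n) * (n + 1)) := by
      rw [hrec, one_mul]
      calc (1/24 + (n:ℝ)) * (5/24 + n) * cf n ≤ (1/24 + (n:ℝ)) * (5/24 + n) * 1 := by
            have : (0:ℝ) ≤ (1/24 + (n:ℝ)) * (5/24 + n) := by positivity
            nlinarith [cf_pos n, ih]
        _ ≤ (3/4 + n) * (n + 1) := by nlinarith
    exact le_of_mul_le_mul_right (by linarith) h5

/-- the WZ certificate polynomial -/
noncomputable def R2 (n k : ℝ) : ℝ := k * (2*k^2 - 3*k + 5/8 + (3/4)*n - 3*n*k)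

noncomputable def pp (n : ℝ) : ℝ := (1/2 + n) * (3/4 + n) * (n + 1)
noncomputable def qq (n : ℝ) : ℝ := (1/12 + n) * (1/4 + n) * (5/12 + n)

/-- the key local WZ identity -/
lemma key (k m : ℕ) :
    R2 (k + m) (k + 1) * cf (k + 1) * cf m - R2 (k + m) k * cf k * cf (m + 1)
      = pp (k + m) * cf k * cf (m + 1) - qq (k + m) * cf k * cf m := by
  have hk := cf_succ k
  have hm := cf_succ m
  have hk1 : ((3:ℝ)/4 + k) * (k + 1) ≠ 0 := by positivity
  have hm1 : ((3:ℝ)/4 + m) * (m + 1) ≠ 0 := by positivity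
  have hck : cf (k + 1) = (1/24 + k) * (5/24 + k) * cf k / ((3/4 + k) * (k + 1)) := by
    field_simp at hk ⊢; linarith [hk]
  have hcm : cf (m + 1) = (1/24 + m) * (5/24 + m) * cf m / ((3/4 + m) * (m + 1)) := by
    field_simp at hm ⊢; linarith [hm]
  rw [hck, hcm]
  unfold R2 pp qq
  field_simp
  ring

/-- Cauchy convolution of cf with itself -/
noncomputable def ee (n : ℕ) : ℝ := ∑ k ∈ Finset.range (n + 1), cf k * cf (n - k)

lemma G_telescope (n : ℕ) :
    ∑ k ∈ Finset.range (n + 1),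
        (pp n * (cf k * cf (n + 1 - k)) - qq n * (cf k * cf (n - k)))
      = R2 n (n + 1) * cf (n + 1) * cf 0 := by
  have h : ∀ k ∈ Finset.range (n + 1),
      pp n * (cf k * cf (n + 1 - k)) - qq n * (cf k * cf (n - k))
        = R2 n (k + 1) * cf (k + 1) * cf (n - k) - R2 n k * cf k * cf (n + 1 - k) := by
    intro k hk
    rw [Finset.mem_range] at hk
    have hkn : k ≤ n := Nat.lt_succ_iff.mp hk
    set m := n - k with hmdef
    have hnm : n = k + m := by omega
    have h1 : n + 1 - k = m + 1 := by omega
    rw [h1, hnm]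
    have := key k m
    push_cast at this ⊢
    linarith [this]
  rw [Finset.sum_congr rfl h]
  have tel : ∑ k ∈ Finset.range (n + 1),
      (R2 n (k+1) * cf (k+1) * cf (n + 1 - (k+1)) - R2 n k * cf k * cf (n + 1 - k))
      = R2 n (n + 1) * cf (n + 1) * cf (n + 1 - (n + 1)) - R2 n 0 * cf 0 * cf (n + 1 - 0) := by
    have t0 := Finset.sum_range_sub (fun k => R2 n k * cf k * cf (n + 1 - k)) (n + 1)
    push_cast at t0 ⊢
    exact t0
  have e0 : R2 n 0 = 0 := by unfold R2; ring
  have hsimp : ∀ k ∈ Finset.range (n + 1),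
      R2 n (k + 1) * cf (k + 1) * cf (n - k) - R2 n k * cf k * cf (n + 1 - k)
        = R2 n (k+1) * cf (k+1) * cf (n + 1 - (k+1)) - R2 n k * cf k * cf (n + 1 - k) := by
    intro k hk
    rw [Finset.mem_range] at hk
    have hnk : n + 1 - (k + 1) = n - k := by omega
    rw [hnk]
  rw [Finset.sum_congr rfl hsimp, tel, e0]
  simp

lemma R2_boundary (n : ℕ) : R2 n (n + 1) = -pp n := by
  unfold R2 pp; ring

lemma ee_rec (n : ℕ) : pp n * ee (n + 1) = qq n * ee n := by
  unfold ee
  rw [Finset.mul_sum, Finset.mul_sum]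
  rw [Finset.sum_range_succ (f := fun k => pp (n:ℝ) * (cf k * cf (n + 1 - k)))]
  have hlast : pp (n:ℝ) * (cf (n+1) * cf (n + 1 - (n+1))) = pp n * cf (n+1) := by
    have h0 : n + 1 - (n + 1) = 0 := by omega
    rw [h0, cf_zero, mul_one]
  rw [hlast]
  have := G_telescope n
  rw [R2_boundary] at this
  have expand : ∑ k ∈ Finset.range (n + 1), pp (n:ℝ) * (cf k * cf (n + 1 - k))
      = ∑ k ∈ Finset.range (n + 1), qq (n:ℝ) * (cf k * cf (n - k))
        + (-pp n * cf (n + 1) * cf 0) := by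
    rw [← this, Finset.sum_sub_distrib]
    ring
  rw [expand, cf_zero]
  ring

lemma pp_pos (n : ℕ) : 0 < pp n := by unfold pp; positivity
lemma qq_pos (n : ℕ) : 0 < qq n := by unfold qq; positivity

lemma ee_eq_df (n : ℕ) : ee n = df n := by
  induction n with
  | zero => simp [ee, cf_zero, df_zero]
  | succ n ih =>
    have h1 := ee_rec n
    have h2 := df_succ n
    have hp := (pp_pos n).ne'
    have : pp n * ee (n + 1) = pp n * df (n + 1) := by
      rw [h1, ih]
      have : pp (n:ℝ) = (1/2 + (n:ℝ)) * (3/4 + n) * (n + 1) := by unfold pp; ring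
      rw [this]
      unfold qq
      linarith [h2]
    exact mul_left_cancel₀ hp this

lemma summable_cf (x : ℝ) (hx : |x| < 1) : Summable fun n => ‖cf n * x ^ n‖ := by
  apply Summable.of_nonneg_of_le (fun n => norm_nonneg _) (fun n => ?_)
    (summable_geometric_of_lt_one (abs_nonneg x) hx)
  rw [norm_mul, norm_pow]
  have h1 : ‖cf n‖ ≤ 1 := by
    rw [Real.norm_eq_abs, abs_of_pos (cf_pos n)]
    exact cf_le_one n
  have h2 : (0:ℝ) ≤ ‖x‖ ^ n := by positivity
  calc ‖cf n‖ * ‖x‖ ^ n ≤ 1 * ‖x‖ ^ n := by nlinarith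
    _ = |x| ^ n := by rw [one_mul, Real.norm_eq_abs]

theorem stmt16 (x : ℝ) (hx : |x| < 1) :
    (∑' n : ℕ, poch (1 / 24) n * poch (5 / 24) n / (poch (3 / 4) n * (n.factorial : ℝ)) *
        (x) ^ n) ^ 2
      = ∑' n : ℕ, poch (1 / 12) n * poch (1 / 4) n * poch (5 / 12) n /
          (poch (1 / 2) n * poch (3 / 4) n * (n.factorial : ℝ)) * (x) ^ n := by
  have hs := summable_cf x hx
  have hL : (∑' n : ℕ, poch (1 / 24) n * poch (5 / 24) n / (poch (3 / 4) n * (n.factorial : ℝ)) *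
      (x) ^ n) = ∑' n : ℕ, cf n * x ^ n := by
    apply tsum_congr; intro n; rfl
  rw [hL, sq]
  rw [tsum_mul_tsum_eq_tsum_sum_range_of_summable_norm hs hs]
  apply tsum_congr
  intro n
  have : ∑ k ∈ Finset.range (n + 1), cf k * x ^ k * (cf (n - k) * x ^ (n - k))
      = ee n * x ^ n := by
    unfold ee
    rw [Finset.sum_mul]
    apply Finset.sum_congr rfl
    intro k hk
    rw [Finset.mem_range] at hk
    have : x ^ k * x ^ (n - k) = x ^ n := by
      rw [← pow_add]
      congr 1
      omega
    calc cf k * x ^ k * (cf (n - k) * x ^ (n - k)) = cf k * cf (n-k) * (x ^ k * x ^ (n-k)) := by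
          ring
      _ = cf k * cf (n - k) * x ^ n := by rw [this]
  rw [this, ee_eq_df]
  rfl
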